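/- arXiv:2309.09567 — 4 statements merged into one kernel-verified Lean document; each statement's English description precedes it below -/
import Mathlib

section
/- Let μ and ν be probability measures on ℝ with finite fourth moments, with means M₁ and Z̄ respectively, and centered fourth moments M₄ᶜ(μ) and M₄ᶜ(ν). Then for every c₀ > 0, W₂(μ, ν)² ≤ c₀²·W₁(μ, ν)² + C·((M₄ᶜ(μ) + M₄ᶜ(ν) + |M₁ − Z̄|⁴)/c₀²)^{1/2} for a universal constant C, where W₁ and W₂ are the 1- and 2-Wasserstein distances. Consequently W₂(μ,ν) ≤ c₀·W₁(μ,ν) + C·((M₄ᶜ(μ) + M₄ᶜ(ν) + |M₁−Z̄|⁴)/c₀²)^{1/4}. -/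
/-!
Fix a coupling `γ` of `μ` and `ν` and write `d = |x - y|`. For every `t > 0` one has pointwise
`d² ≤ t d + d⁴ / t²`; integrating and optimising over `t` interpolates `L²` between `L¹` and `L⁴`:
`∫ d² ≤ c₀² (∫ d)² + (∫ d⁴)^{1/2} / c₀`. Splitting `x - y = (x - M₁) - (y - Z̄) + (M₁ - Z̄)` gives
`∫ d⁴ ≤ 27 (M₄ᶜ(μ) + M₄ᶜ(ν) + |M₁ - Z̄|⁴)`, so the first inequality holds for every coupling with
`C = 6`. Passing to the infimum over couplings on both sides (`a ↦ c₀² a²` is monotone on `a ≥ 0`)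
yields the bound for `W₂²`, and the bound for `W₂` follows by taking square roots.
-/

open Real MeasureTheory

/-- A coupling of two measures on `ℝ`. -/
def IsCoupling (plan : Measure (ℝ × ℝ)) (μ ν : Measure ℝ) : Prop :=
  plan.map Prod.fst = μ ∧ plan.map Prod.snd = ν

/-- The 1-Wasserstein distance. -/
noncomputable def W1 (μ ν : Measure ℝ) : ℝ :=
  sInf {c | ∃ plan : Measure (ℝ × ℝ), IsCoupling plan μ ν ∧
    c = ∫ p : ℝ × ℝ, |p.1 - p.2| ∂plan}

/-- The 2-Wasserstein distance. -/
noncomputable def W2 (μ ν : Measure ℝ) : ℝ :=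
  Real.sqrt (sInf {c | ∃ plan : Measure (ℝ × ℝ), IsCoupling plan μ ν ∧
    c = ∫ p : ℝ × ℝ, (p.1 - p.2) ^ 2 ∂plan})

/-- The mean of a measure on `ℝ`. -/
noncomputable def meanM (μ : Measure ℝ) : ℝ := ∫ x, x ∂μ

/-- The centered fourth moment of a measure on `ℝ`. -/
noncomputable def M4c (μ : Measure ℝ) : ℝ := ∫ x, (x - meanM μ) ^ 4 ∂μ

open Filter Topology

lemma sq_le_mul_abs_add_pow_four_div (x : ℝ) {t : ℝ} (ht : 0 < t) :
    x ^ 2 ≤ t * |x| + x ^ 4 / t ^ 2 := by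
  have h₂ : |x| ^ 2 = x ^ 2 := sq_abs x
  have h₄ : |x| ^ 4 = x ^ 4 := Even.pow_abs ⟨2, rfl⟩ x
  rw [← h₂, ← h₄]
  rcases le_total |x| t with h | h
  · have : 0 ≤ |x| ^ 4 / t ^ 2 := by positivity
    nlinarith [abs_nonneg x]
  · have : |x| ^ 2 ≤ |x| ^ 4 / t ^ 2 := by
      rw [le_div_iff₀ (by positivity)]
      nlinarith [pow_le_pow_left₀ ht.le h 2, sq_nonneg (|x| ^ 2)]
    nlinarith [abs_nonneg x]

lemma abs_le_one_add_pow_four (x : ℝ) : |x| ≤ 1 + x ^ 4 := by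
  have h₄ : |x| ^ 4 = x ^ 4 := Even.pow_abs ⟨2, rfl⟩ x
  rw [← h₄]
  rcases le_total |x| 1 with h | h
  · nlinarith [pow_nonneg (abs_nonneg x) 4]
  · nlinarith [le_self_pow₀ h (by norm_num : 4 ≠ 0)]

lemma add_add_pow_four_le (u v w : ℝ) : (u + v + w) ^ 4 ≤ 27 * (u ^ 4 + v ^ 4 + w ^ 4) := by
  have h₂ : (u + v + w) ^ 2 ≤ 3 * (u ^ 2 + v ^ 2 + w ^ 2) := by
    nlinarith [sq_nonneg (u - v), sq_nonneg (v - w), sq_nonneg (u - w)]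
  have h₄ : (u ^ 2 + v ^ 2 + w ^ 2) ^ 2 ≤ 3 * (u ^ 4 + v ^ 4 + w ^ 4) := by
    nlinarith [sq_nonneg (u ^ 2 - v ^ 2), sq_nonneg (v ^ 2 - w ^ 2), sq_nonneg (u ^ 2 - w ^ 2)]
  nlinarith [pow_le_pow_left₀ (sq_nonneg _) h₂ 2]

lemma sub_pow_four_le (x y a b : ℝ) :
    (x - y) ^ 4 ≤ 27 * ((x - a) ^ 4 + (y - b) ^ 4 + |a - b| ^ 4) := by
  have habs : |a - b| ^ 4 = (a - b) ^ 4 := Even.pow_abs ⟨2, rfl⟩ _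
  have hneg : (y - b) ^ 4 = (b - y) ^ 4 := by ring
  rw [habs, hneg]
  convert add_add_pow_four_le (x - a) (b - y) (a - b) using 2
  ring

lemma le_sq_mul_sq_add_sqrt_div_of_forall {S A B c : ℝ} (hB : 0 ≤ B) (hc : 0 < c)
    (h : ∀ t > 0, S ≤ t * A + B / t ^ 2) : S ≤ c ^ 2 * A ^ 2 + √B / c := by
  rcases hB.eq_or_lt with rfl | hB
  · have hlim : Tendsto (fun t : ℝ => t * A) (𝓝[>] 0) (𝓝 0) := by
      simpa using ((continuous_mul_const A).tendsto 0).mono_left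
        (nhdsWithin_le_nhds (s := Set.Ioi 0))
    have : S ≤ 0 := ge_of_tendsto hlim (eventually_nhdsWithin_of_forall fun t ht => by
      simpa using h t ht)
    simp only [Real.sqrt_zero, zero_div, add_zero]
    nlinarith [sq_nonneg (c * A)]
  · -- `t² = 2 c √B` balances `B / t²` against the AM-GM bound `t A ≤ c² A² + t² / (4 c²)`
    set t := √(2 * c * √B)
    have ht₀ : 0 < t := Real.sqrt_pos.2 (by positivity)
    have ht : t ^ 2 = 2 * c * √B := Real.sq_sqrt (by positivity)
    have hB' : √B ^ 2 = B := Real.sq_sqrt hB.le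
    calc S ≤ t * A + B / t ^ 2 := h t ht₀
      _ = c ^ 2 * A ^ 2 + √B / c - (t - 2 * c ^ 2 * A) ^ 2 / (4 * c ^ 2) := by
        field_simp
        linear_combination (t ^ 2 - 2 * c * √B) * ht - 4 * c ^ 2 * hB'
      _ ≤ c ^ 2 * A ^ 2 + √B / c := sub_le_self _ (by positivity)

lemma integral_sq_le_mul_integral_abs_add {α : Type*} [MeasurableSpace α] {ρ : Measure α}
    {f : α → ℝ} (h₁ : Integrable (fun x => |f x|) ρ) (h₄ : Integrable (fun x => f x ^ 4) ρ)
    {t : ℝ} (ht : 0 < t) :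
    ∫ x, f x ^ 2 ∂ρ ≤ t * ∫ x, |f x| ∂ρ + (∫ x, f x ^ 4 ∂ρ) / t ^ 2 := by
  rw [← integral_const_mul, ← integral_div, ← integral_add (h₁.const_mul t) (h₄.div_const _)]
  exact integral_mono_of_nonneg (ae_of_all _ fun x => sq_nonneg _)
    ((h₁.const_mul t).add (h₄.div_const _))
    (ae_of_all _ fun x => sq_le_mul_abs_add_pow_four_div _ ht)

lemma integrable_sub_const_pow_four {μ : Measure ℝ} [IsFiniteMeasure μ]
    (h : Integrable (fun x => x ^ 4) μ) (m : ℝ) : Integrable (fun x => (x - m) ^ 4) μ :=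
  ((h.add (integrable_const (m ^ 4))).const_mul 27).mono' (by fun_prop) (ae_of_all _ fun x => by
    rw [Real.norm_of_nonneg (by positivity)]
    simpa using sub_pow_four_le x m 0 0)

section Coupling

variable {γ : Measure (ℝ × ℝ)} {μ ν : Measure ℝ}

lemma isCoupling_prod (μ ν : Measure ℝ) [IsProbabilityMeasure μ] [IsProbabilityMeasure ν] :
    IsCoupling (μ.prod ν) μ ν :=
  ⟨by simp, by simp⟩

lemma IsCoupling.isProbabilityMeasure (hγ : IsCoupling γ μ ν) [IsProbabilityMeasure μ] :
    IsProbabilityMeasure γ :=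
  (Measure.isProbabilityMeasure_map_iff measurable_fst.aemeasurable).1 (hγ.1 ▸ ‹_›)

lemma IsCoupling.integrable_comp_fst (hγ : IsCoupling γ μ ν) {f : ℝ → ℝ} (hf : Integrable f μ) :
    Integrable (fun p : ℝ × ℝ => f p.1) γ :=
  (hγ.1 ▸ hf : Integrable f (γ.map Prod.fst)).comp_measurable measurable_fst

lemma IsCoupling.integrable_comp_snd (hγ : IsCoupling γ μ ν) {f : ℝ → ℝ} (hf : Integrable f ν) :
    Integrable (fun p : ℝ × ℝ => f p.2) γ :=
  (hγ.2 ▸ hf : Integrable f (γ.map Prod.snd)).comp_measurable measurable_snd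

lemma IsCoupling.integral_comp_fst (hγ : IsCoupling γ μ ν) {f : ℝ → ℝ}
    (hf : AEStronglyMeasurable f μ) : ∫ p : ℝ × ℝ, f p.1 ∂γ = ∫ x, f x ∂μ := by
  rw [← integral_map measurable_fst.aemeasurable (hγ.1 ▸ hf), hγ.1]

lemma IsCoupling.integral_comp_snd (hγ : IsCoupling γ μ ν) {f : ℝ → ℝ}
    (hf : AEStronglyMeasurable f ν) : ∫ p : ℝ × ℝ, f p.2 ∂γ = ∫ x, f x ∂ν := by
  rw [← integral_map measurable_snd.aemeasurable (hγ.2 ▸ hf), hγ.2]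

lemma IsCoupling.integrable_sub_pow_four (hγ : IsCoupling γ μ ν)
    (hμ : Integrable (fun x => x ^ 4) μ) (hν : Integrable (fun x => x ^ 4) ν) :
    Integrable (fun p : ℝ × ℝ => (p.1 - p.2) ^ 4) γ :=
  (((hγ.integrable_comp_fst hμ).add (hγ.integrable_comp_snd hν)).const_mul 27).mono' (by fun_prop)
    (ae_of_all _ fun p => by
      rw [Real.norm_of_nonneg (by positivity)]
      simpa using sub_pow_four_le p.1 p.2 0 0)

lemma IsCoupling.integral_sub_pow_four_le (hγ : IsCoupling γ μ ν) [IsProbabilityMeasure μ]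
    [IsProbabilityMeasure ν] (hμ : Integrable (fun x => x ^ 4) μ)
    (hν : Integrable (fun x => x ^ 4) ν) :
    ∫ p : ℝ × ℝ, (p.1 - p.2) ^ 4 ∂γ ≤ 27 * (M4c μ + M4c ν + |meanM μ - meanM ν| ^ 4) := by
  have := hγ.isProbabilityMeasure
  have hμc := hγ.integrable_comp_fst (integrable_sub_const_pow_four hμ (meanM μ))
  have hνc := hγ.integrable_comp_snd (integrable_sub_const_pow_four hν (meanM ν))
  have hsum : Integrable (fun p : ℝ × ℝ => (p.1 - meanM μ) ^ 4 + (p.2 - meanM ν) ^ 4) γ :=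
    hμc.add hνc
  calc ∫ p : ℝ × ℝ, (p.1 - p.2) ^ 4 ∂γ
      ≤ ∫ p : ℝ × ℝ, 27 * ((p.1 - meanM μ) ^ 4 + (p.2 - meanM ν) ^ 4
          + |meanM μ - meanM ν| ^ 4) ∂γ :=
        integral_mono_of_nonneg (ae_of_all _ fun p => by positivity)
          ((hsum.add (integrable_const _)).const_mul 27)
          (ae_of_all _ fun p => sub_pow_four_le _ _ _ _)
    _ = 27 * (M4c μ + M4c ν + |meanM μ - meanM ν| ^ 4) := by
        rw [integral_const_mul, integral_add hsum (integrable_const _),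
          integral_add hμc hνc,
          hγ.integral_comp_fst (f := fun x => (x - meanM μ) ^ 4) (by fun_prop),
          hγ.integral_comp_snd (f := fun x => (x - meanM ν) ^ 4) (by fun_prop), integral_const]
        simp [M4c]

lemma IsCoupling.integral_sq_le (hγ : IsCoupling γ μ ν) [IsProbabilityMeasure μ]
    [IsProbabilityMeasure ν] (hμ : Integrable (fun x => x ^ 4) μ)
    (hν : Integrable (fun x => x ^ 4) ν) {c : ℝ} (hc : 0 < c) :
    ∫ p : ℝ × ℝ, (p.1 - p.2) ^ 2 ∂γ ≤ c ^ 2 * (∫ p : ℝ × ℝ, |p.1 - p.2| ∂γ) ^ 2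
      + 6 * √((M4c μ + M4c ν + |meanM μ - meanM ν| ^ 4) / c ^ 2) := by
  have := hγ.isProbabilityMeasure
  set M := M4c μ + M4c ν + |meanM μ - meanM ν| ^ 4
  have h₄ := hγ.integrable_sub_pow_four hμ hν
  have h₁ : Integrable (fun p : ℝ × ℝ => |p.1 - p.2|) γ :=
    ((integrable_const 1).add h₄).mono' (by fun_prop) (ae_of_all _ fun p => by
      rw [Real.norm_eq_abs, abs_abs]
      exact abs_le_one_add_pow_four _)
  have hB : √(∫ p : ℝ × ℝ, (p.1 - p.2) ^ 4 ∂γ) ≤ 6 * √M :=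
    calc √(∫ p : ℝ × ℝ, (p.1 - p.2) ^ 4 ∂γ) ≤ √27 * √M := by
          rw [← Real.sqrt_mul (by norm_num)]
          exact Real.sqrt_le_sqrt (hγ.integral_sub_pow_four_le hμ hν)
      _ ≤ 6 * √M := by
          gcongr
          rw [Real.sqrt_le_left (by norm_num)]
          norm_num
  calc ∫ p : ℝ × ℝ, (p.1 - p.2) ^ 2 ∂γ
      ≤ c ^ 2 * (∫ p : ℝ × ℝ, |p.1 - p.2| ∂γ) ^ 2 + √(∫ p : ℝ × ℝ, (p.1 - p.2) ^ 4 ∂γ) / c :=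
        le_sq_mul_sq_add_sqrt_div_of_forall (integral_nonneg fun p => by positivity) hc
          fun t ht => integral_sq_le_mul_integral_abs_add h₁ h₄ ht
    _ ≤ c ^ 2 * (∫ p : ℝ × ℝ, |p.1 - p.2| ∂γ) ^ 2 + 6 * √M / c := by gcongr
    _ = c ^ 2 * (∫ p : ℝ × ℝ, |p.1 - p.2| ∂γ) ^ 2 + 6 * √(M / c ^ 2) := by
        rw [Real.sqrt_div' _ (sq_nonneg c), Real.sqrt_sq hc.le, mul_div_assoc]

lemma W2_sq_le (hγ : IsCoupling γ μ ν) : W2 μ ν ^ 2 ≤ ∫ p : ℝ × ℝ, (p.1 - p.2) ^ 2 ∂γ := by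
  have hbdd : BddBelow {c | ∃ ρ : Measure (ℝ × ℝ), IsCoupling ρ μ ν ∧
      c = ∫ p : ℝ × ℝ, (p.1 - p.2) ^ 2 ∂ρ} :=
    ⟨0, by rintro _ ⟨ρ, -, rfl⟩; exact integral_nonneg fun p => sq_nonneg _⟩
  rw [W2, Real.sq_sqrt']
  exact max_le (csInf_le hbdd ⟨γ, hγ, rfl⟩) (integral_nonneg fun p => sq_nonneg _)

lemma W1_nonneg (μ ν : Measure ℝ) : 0 ≤ W1 μ ν :=
  Real.sInf_nonneg (by rintro _ ⟨γ, -, rfl⟩; exact integral_nonneg fun p => abs_nonneg _)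

lemma le_W1_sq (hγ : IsCoupling γ μ ν) {a : ℝ}
    (h : ∀ ρ, IsCoupling ρ μ ν → a ≤ (∫ p : ℝ × ℝ, |p.1 - p.2| ∂ρ) ^ 2) : a ≤ W1 μ ν ^ 2 := by
  have hsqrt : √a ≤ W1 μ ν := le_csInf ⟨_, γ, hγ, rfl⟩ <| by
    rintro _ ⟨ρ, hρ, rfl⟩
    exact (Real.sqrt_le_left (integral_nonneg fun p => abs_nonneg _)).2 (h ρ hρ)
  calc a ≤ √a ^ 2 := Real.sq_sqrt' ▸ le_max_left a 0
    _ ≤ W1 μ ν ^ 2 := pow_le_pow_left₀ (Real.sqrt_nonneg a) hsqrt 2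

end Coupling

/-- There is a universal constant `C` such that for all probability measures `μ, ν` on `ℝ`
with finite fourth moments and all `c₀ > 0`,
`W₂(μ,ν)² ≤ c₀² W₁(μ,ν)² + C ((M₄ᶜ(μ)+M₄ᶜ(ν)+|M₁−Z̄|⁴)/c₀²)^{1/2}`, and consequently
`W₂(μ,ν) ≤ c₀ W₁(μ,ν) + C ((M₄ᶜ(μ)+M₄ᶜ(ν)+|M₁−Z̄|⁴)/c₀²)^{1/4}`. -/
theorem stmt10 :
    ∃ C > 0, ∀ μ ν : Measure ℝ, IsProbabilityMeasure μ → IsProbabilityMeasure ν →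
      Integrable (fun x => x ^ 4) μ → Integrable (fun x => x ^ 4) ν →
      ∀ c₀ : ℝ, 0 < c₀ →
        W2 μ ν ^ 2 ≤ c₀ ^ 2 * W1 μ ν ^ 2
            + C * Real.sqrt ((M4c μ + M4c ν + |meanM μ - meanM ν| ^ 4) / c₀ ^ 2)
        ∧ W2 μ ν ≤ c₀ * W1 μ ν
            + C * Real.sqrt (Real.sqrt ((M4c μ + M4c ν + |meanM μ - meanM ν| ^ 4) / c₀ ^ 2)) := by
  refine ⟨6, by norm_num, fun μ ν _ _ hμ hν c₀ hc₀ => ?_⟩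
  set s := √((M4c μ + M4c ν + |meanM μ - meanM ν| ^ 4) / c₀ ^ 2)
  have hW₂ : W2 μ ν ^ 2 ≤ c₀ ^ 2 * W1 μ ν ^ 2 + 6 * s := by
    have h := le_W1_sq (isCoupling_prod μ ν) (a := (W2 μ ν ^ 2 - 6 * s) / c₀ ^ 2) fun γ hγ => by
      rw [div_le_iff₀' (by positivity), sub_le_iff_le_add]
      exact (W2_sq_le hγ).trans (hγ.integral_sq_le hμ hν hc₀)
    rwa [div_le_iff₀' (by positivity), sub_le_iff_le_add] at h
  refine ⟨hW₂, ?_⟩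
  have hs : √s ^ 2 = s := Real.sq_sqrt (Real.sqrt_nonneg _)
  have hW₁ := W1_nonneg μ ν
  refine le_of_pow_le_pow_left₀ two_ne_zero (by positivity) ?_
  nlinarith [Real.sqrt_nonneg s, mul_nonneg (mul_nonneg hc₀.le hW₁) (Real.sqrt_nonneg s)]
end

section
/- Fix k > 1 and let w_k(x) = (1+|x|)^k, X_k = {n ∈ L¹(ℝ) : ∫ w_k |n| < ∞} with norm ‖n‖ = ∫ w_k |n|. Let Γ be a Gaussian density (or any nonnegative kernel with w_k·Γ ∈ L¹). For n with ∫ n ≠ 0 define T[n](x) = ∫∫ Γ(x−(y+y')/2)·n(y)·n(y')/(∫n) dy dy'. Then for all n, ñ ∈ X_k ∩ C_b(ℝ) with nonzero integrals, ‖T[n] − T[ñ]‖_{X_k} ≤ C·(‖n‖_{X_k}/|∫n|)·(‖ñ‖_{X_k}/|∫ñ|)·‖n − ñ‖_{X_k}, where C depends only on k and Γ. -/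
/-!
Write `T[n] - T[ñ]` as the integral of `Γ (x - (y + y') / 2)` against the kernel
`D = n ⊗ n / ∫ n - ñ ⊗ ñ / ∫ ñ` on `ℝ × ℝ`. Since `w (x) ≤ w (x - s) w (s)` and
`w ((y + y') / 2) ≤ w (y) w (y')`, Tonelli bounds `‖T[n] - T[ñ]‖` by `‖w Γ‖₁` times the
`w ⊗ w`-weighted `L¹` norm of `D`. The splitting
`D = (n - ñ) ⊗ n / ∫ n + ñ ⊗ (n - ñ) / ∫ ñ + ñ ⊗ n (∫ ñ - ∫ n) / (∫ n ∫ ñ)`,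
together with `|∫ f| ≤ ‖f‖` and `‖f ⊗ g‖ = ‖f‖ ‖g‖`, bounds that norm by
`3 (‖n‖ / |∫ n|) (‖ñ‖ / |∫ ñ|) ‖n - ñ‖`.
-/

open Real MeasureTheory

lemma abs_mul_div_sub_mul_div_le (a b c d I J : ℝ) (hI : I ≠ 0) (hJ : J ≠ 0) :
    |a * b / I - c * d / J| ≤
      |(a - c) * b| / |I| + |c * (b - d)| / |J| + |c * b| * (|J - I| / (|I| * |J|)) := by
  have h : a * b / I - c * d / J =
      (a - c) * b / I + c * (b - d) / J + c * b * ((J - I) / (I * J)) := by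
    field_simp; ring
  rw [h]
  refine (abs_add_three _ _ _).trans_eq ?_
  rw [abs_div, abs_div, abs_mul (c * b), abs_div, abs_mul I J]

lemma integrable_kernel_tensor {Γ f g : ℝ → ℝ} (hΓm : Measurable Γ) (hΓ : Integrable Γ)
    (hfm : Measurable f) (hf : Integrable f) (hgm : Measurable g) {M : ℝ}
    (hgM : ∀ y, |g y| ≤ M) (x : ℝ) :
    Integrable (fun p : ℝ × ℝ => Γ (x - (p.1 + p.2) / 2) * f p.1 * g p.2)
      (volume.prod volume) := by
  -- the shear `(y, z) ↦ (y, z - y)` turns the integrand into `Γ (x - z / 2) * f y * g (z - y)`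
  have hmp := measurePreserving_prod_sub (volume : Measure ℝ) (volume : Measure ℝ)
  refine (hmp.integrable_comp (by fun_prop)).mp ?_
  have hΓx : Integrable fun z => Γ (x - z / 2) := (hΓ.comp_sub_left x).comp_div two_ne_zero
  refine (hf.norm.mul_prod (hΓx.norm.const_mul M)).mono' (by fun_prop) (.of_forall fun p => ?_)
  simp only [Function.comp_apply, add_sub_cancel, norm_mul, Real.norm_eq_abs]
  calc |Γ (x - p.2 / 2)| * |f p.1| * |g (p.2 - p.1)| ≤ |Γ (x - p.2 / 2)| * |f p.1| * M := by
        gcongr; exact hgM _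
    _ = |f p.1| * (M * |Γ (x - p.2 / 2)|) := by ring

section Weighted

variable {k : ℝ}

lemma one_le_weight (hk : 0 ≤ k) (x : ℝ) : 1 ≤ (1 + |x|) ^ k :=
  one_le_rpow (by linarith [abs_nonneg x]) hk

lemma continuous_weight : Continuous fun x : ℝ => (1 + |x|) ^ k :=
  (continuous_const.add continuous_abs).rpow_const fun x =>
    Or.inl (by positivity : (0 : ℝ) < 1 + |x|).ne'

lemma weight_add_le (hk : 0 ≤ k) (a b : ℝ) :
    (1 + |a + b|) ^ k ≤ (1 + |a|) ^ k * (1 + |b|) ^ k := by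
  rw [← mul_rpow (by positivity) (by positivity)]
  refine rpow_le_rpow (by positivity) ?_ hk
  nlinarith [abs_add_le a b, abs_nonneg a, abs_nonneg b]

lemma weight_midpoint_le (hk : 0 ≤ k) (y y' : ℝ) :
    (1 + |(y + y') / 2|) ^ k ≤ (1 + |y|) ^ k * (1 + |y'|) ^ k := by
  refine le_trans ?_ (weight_add_le hk y y')
  refine rpow_le_rpow (by positivity) ?_ hk
  rw [abs_div, abs_two]
  linarith [abs_nonneg (y + y')]

lemma integrable_of_integrable_weight_mul_abs (hk : 0 ≤ k) {f : ℝ → ℝ}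
    (hfm : AEStronglyMeasurable f) (hf : Integrable fun x => (1 + |x|) ^ k * |f x|) :
    Integrable f :=
  hf.mono' hfm <| .of_forall fun x => le_mul_of_one_le_left (abs_nonneg _) (one_le_weight hk x)

lemma abs_integral_le_integral_weight_mul_abs (hk : 0 ≤ k) {f : ℝ → ℝ}
    (hf : Integrable fun x => (1 + |x|) ^ k * |f x|) :
    |∫ x, f x| ≤ ∫ x, (1 + |x|) ^ k * |f x| :=
  abs_integral_le_integral_abs.trans <| integral_mono_of_nonneg (.of_forall fun _ => abs_nonneg _)
    hf (.of_forall fun x => le_mul_of_one_le_left (abs_nonneg _) (one_le_weight hk x))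

lemma integrable_weight_mul_abs_sub {f g : ℝ → ℝ} (hfm : AEStronglyMeasurable f)
    (hgm : AEStronglyMeasurable g) (hf : Integrable fun x => (1 + |x|) ^ k * |f x|)
    (hg : Integrable fun x => (1 + |x|) ^ k * |g x|) :
    Integrable fun x => (1 + |x|) ^ k * |f x - g x| := by
  refine (hf.add hg).mono' (continuous_weight.aestronglyMeasurable.mul (hfm.sub hgm).norm)
    (.of_forall fun x => ?_)
  have hw : 0 ≤ (1 + |x|) ^ k := by positivity
  rw [norm_mul, norm_of_nonneg hw, Real.norm_eq_abs, abs_abs, Pi.add_apply, ← mul_add]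
  exact mul_le_mul_of_nonneg_left (abs_sub _ _) hw

lemma integrable_weight_mul_comp_sub (hk : 0 ≤ k) {Γ : ℝ → ℝ} (hΓm : Measurable Γ)
    (hΓ : Integrable fun x => (1 + |x|) ^ k * Γ x) (s : ℝ) :
    Integrable fun x => (1 + |x|) ^ k * Γ (x - s) := by
  refine ((hΓ.norm.comp_sub_right s).const_mul ((1 + |s|) ^ k)).mono'
    (continuous_weight.measurable.mul (hΓm.comp (measurable_sub_const s))).aestronglyMeasurable
    (.of_forall fun x => ?_)
  have h := weight_add_le hk (x - s) s
  rw [sub_add_cancel] at h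
  simp only [norm_mul, Real.norm_eq_abs, abs_of_nonneg (by positivity : (0 : ℝ) ≤ (1 + |x|) ^ k),
    abs_of_nonneg (by positivity : (0 : ℝ) ≤ (1 + |x - s|) ^ k)]
  nlinarith [abs_nonneg (Γ (x - s))]

lemma integral_weight_mul_comp_sub_le (hk : 0 ≤ k) {Γ : ℝ → ℝ} (hΓ : ∀ x, 0 ≤ Γ x)
    (hΓm : Measurable Γ) (hΓint : Integrable fun x => (1 + |x|) ^ k * Γ x) (s : ℝ) :
    ∫ x, (1 + |x|) ^ k * Γ (x - s) ≤ (1 + |s|) ^ k * ∫ x, (1 + |x|) ^ k * Γ x := by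
  calc ∫ x, (1 + |x|) ^ k * Γ (x - s)
      ≤ ∫ x, (1 + |s|) ^ k * ((1 + |x - s|) ^ k * Γ (x - s)) := by
        refine integral_mono (integrable_weight_mul_comp_sub hk hΓm hΓint s)
          ((hΓint.comp_sub_right s).const_mul _) fun x => ?_
        have h := weight_add_le hk (x - s) s
        rw [sub_add_cancel] at h
        nlinarith [hΓ (x - s)]
    _ = (1 + |s|) ^ k * ∫ x, (1 + |x|) ^ k * Γ x := by
        rw [integral_const_mul, integral_sub_right_eq_self (fun x => (1 + |x|) ^ k * Γ x) s]

lemma integral_weight_mul_abs_integral_kernel_le (hk : 0 ≤ k) {Γ : ℝ → ℝ}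
    (hΓ : ∀ x, 0 ≤ Γ x) (hΓm : Measurable Γ) (hΓint : Integrable fun x => (1 + |x|) ^ k * Γ x)
    {F : ℝ × ℝ → ℝ} (hFm : Measurable F)
    (hF : Integrable (fun p : ℝ × ℝ => (1 + |p.1|) ^ k * (1 + |p.2|) ^ k * |F p|)
      (volume.prod volume)) :
    ∫ x, (1 + |x|) ^ k * |∫ p : ℝ × ℝ, Γ (x - (p.1 + p.2) / 2) * F p ∂(volume.prod volume)| ≤
      (∫ x, (1 + |x|) ^ k * Γ x) *
        ∫ p : ℝ × ℝ, (1 + |p.1|) ^ k * (1 + |p.2|) ^ k * |F p| ∂(volume.prod volume) := by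
  set A := ∫ x, (1 + |x|) ^ k * Γ x
  set H : ℝ × (ℝ × ℝ) → ℝ :=
    fun q => (1 + |q.1|) ^ k * Γ (q.1 - (q.2.1 + q.2.2) / 2) * |F q.2|
  have hH0 : ∀ q, 0 ≤ H q := fun q => by have := hΓ (q.1 - (q.2.1 + q.2.2) / 2); positivity
  have hHm : Measurable H := by fun_prop
  have hinner : ∀ p : ℝ × ℝ,
      ∫ x, H (x, p) ≤ A * ((1 + |p.1|) ^ k * (1 + |p.2|) ^ k * |F p|) := fun p =>
    calc ∫ x, H (x, p) = (∫ x, (1 + |x|) ^ k * Γ (x - (p.1 + p.2) / 2)) * |F p| :=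
          integral_mul_const (μ := volume) |F p| _
      _ ≤ ((1 + |(p.1 + p.2) / 2|) ^ k * A) * |F p| := by
          gcongr
          exact integral_weight_mul_comp_sub_le hk hΓ hΓm hΓint _
      _ ≤ ((1 + |p.1|) ^ k * (1 + |p.2|) ^ k * A) * |F p| := by
          gcongr
          · exact integral_nonneg fun x => mul_nonneg (by positivity) (hΓ x)
          · exact weight_midpoint_le hk _ _
      _ = A * ((1 + |p.1|) ^ k * (1 + |p.2|) ^ k * |F p|) := by ring
  have hHint : Integrable H (volume.prod (volume.prod volume)) := by
    refine (integrable_prod_iff' hHm.aestronglyMeasurable).mpr ⟨.of_forall fun p => ?_, ?_⟩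
    · exact (integrable_weight_mul_comp_sub hk hΓm hΓint ((p.1 + p.2) / 2)).mul_const |F p|
    · refine (hF.const_mul A).mono' hHm.norm.aestronglyMeasurable.prod_swap.integral_prod_right'
        (.of_forall fun p => ?_)
      simp only [norm_of_nonneg (hH0 _)]
      rw [norm_of_nonneg (integral_nonneg fun x => hH0 _)]
      exact hinner p
  calc ∫ x, (1 + |x|) ^ k * |∫ p : ℝ × ℝ, Γ (x - (p.1 + p.2) / 2) * F p ∂(volume.prod volume)|
      ≤ ∫ x, ∫ p : ℝ × ℝ, H (x, p) ∂(volume.prod volume) := by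
        refine integral_mono_of_nonneg (.of_forall fun x => by positivity)
          hHint.integral_prod_left (.of_forall fun x => ?_)
        dsimp only [H]
        refine (mul_le_mul_of_nonneg_left abs_integral_le_integral_abs (by positivity)).trans_eq ?_
        rw [← integral_const_mul]
        congr 1 with p
        rw [abs_mul, abs_of_nonneg (hΓ _), mul_assoc]
      _ = ∫ p : ℝ × ℝ, (∫ x, H (x, p)) ∂(volume.prod volume) := integral_integral_swap hHint
      _ ≤ ∫ p : ℝ × ℝ, A * ((1 + |p.1|) ^ k * (1 + |p.2|) ^ k * |F p|) ∂(volume.prod volume) :=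
        integral_mono_of_nonneg (.of_forall fun p => integral_nonneg fun x => hH0 _)
          (hF.const_mul A) (.of_forall hinner)
      _ = A * ∫ p : ℝ × ℝ, (1 + |p.1|) ^ k * (1 + |p.2|) ^ k * |F p| ∂(volume.prod volume) :=
        integral_const_mul _ _

lemma integrable_weight_tensor {f g : ℝ → ℝ} (hf : Integrable fun x => (1 + |x|) ^ k * |f x|)
    (hg : Integrable fun x => (1 + |x|) ^ k * |g x|) :
    Integrable (fun p : ℝ × ℝ => (1 + |p.1|) ^ k * (1 + |p.2|) ^ k * |f p.1 * g p.2|)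
      (volume.prod volume) :=
  (hf.mul_prod hg).congr <| .of_forall fun p => by simp only [abs_mul]; ring

lemma integral_weight_tensor (f g : ℝ → ℝ) :
    ∫ p : ℝ × ℝ, (1 + |p.1|) ^ k * (1 + |p.2|) ^ k * |f p.1 * g p.2| ∂(volume.prod volume) =
      (∫ x, (1 + |x|) ^ k * |f x|) * ∫ x, (1 + |x|) ^ k * |g x| := by
  rw [← integral_prod_mul]
  congr 1 with p
  simp only [abs_mul]; ring

variable {n m : ℝ → ℝ}

lemma integrable_weight_mul_abs_tensor_div_sub (hn : Integrable fun x => (1 + |x|) ^ k * |n x|)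
    (hm : Integrable fun x => (1 + |x|) ^ k * |m x|) (hnm : Measurable n) (hmm : Measurable m)
    (I J : ℝ) :
    Integrable (fun p : ℝ × ℝ =>
      (1 + |p.1|) ^ k * (1 + |p.2|) ^ k * |n p.1 * n p.2 / I - m p.1 * m p.2 / J|)
      (volume.prod volume) := by
  refine (((integrable_weight_tensor hn hn).div_const |I|).add
    ((integrable_weight_tensor hm hm).div_const |J|)).mono' (by fun_prop) (.of_forall fun p => ?_)
  rw [norm_of_nonneg (by positivity), Pi.add_apply]
  calc (1 + |p.1|) ^ k * (1 + |p.2|) ^ k * |n p.1 * n p.2 / I - m p.1 * m p.2 / J|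
      ≤ (1 + |p.1|) ^ k * (1 + |p.2|) ^ k * (|n p.1 * n p.2| / |I| + |m p.1 * m p.2| / |J|) := by
        gcongr
        rw [← abs_div, ← abs_div]
        exact abs_sub _ _
    _ = _ := by ring

lemma integral_weight_mul_abs_tensor_div_sub_le (hk : 0 ≤ k)
    (hn : Integrable fun x => (1 + |x|) ^ k * |n x|)
    (hm : Integrable fun x => (1 + |x|) ^ k * |m x|) (hnm : Measurable n) (hmm : Measurable m)
    (hI : ∫ x, n x ≠ 0) (hJ : ∫ x, m x ≠ 0) :
    ∫ p : ℝ × ℝ, (1 + |p.1|) ^ k * (1 + |p.2|) ^ k *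
        |n p.1 * n p.2 / (∫ x, n x) - m p.1 * m p.2 / (∫ x, m x)| ∂(volume.prod volume) ≤
      3 * ((∫ x, (1 + |x|) ^ k * |n x|) / |∫ x, n x|) *
        ((∫ x, (1 + |x|) ^ k * |m x|) / |∫ x, m x|) * ∫ x, (1 + |x|) ^ k * |n x - m x| := by
  have hnd := integrable_weight_mul_abs_sub hnm.aestronglyMeasurable hmm.aestronglyMeasurable hn hm
  have hJI : |(∫ x, m x) - ∫ x, n x| ≤ ∫ x, (1 + |x|) ^ k * |n x - m x| := by
    rw [abs_sub_comm, ← integral_sub (integrable_of_integrable_weight_mul_abs hk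
      hnm.aestronglyMeasurable hn) (integrable_of_integrable_weight_mul_abs hk
      hmm.aestronglyMeasurable hm)]
    exact abs_integral_le_integral_weight_mul_abs hk hnd
  have ha : 1 ≤ (∫ x, (1 + |x|) ^ k * |n x|) / |∫ x, n x| :=
    (one_le_div (abs_pos.2 hI)).2 (abs_integral_le_integral_weight_mul_abs hk hn)
  have hb : 1 ≤ (∫ x, (1 + |x|) ^ k * |m x|) / |∫ x, m x| :=
    (one_le_div (abs_pos.2 hJ)).2 (abs_integral_le_integral_weight_mul_abs hk hm)
  set I := ∫ x, n x
  set J := ∫ x, m x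
  set Nn := ∫ x, (1 + |x|) ^ k * |n x|
  set Nm := ∫ x, (1 + |x|) ^ k * |m x|
  set Nd := ∫ x, (1 + |x|) ^ k * |n x - m x|
  have hNd : 0 ≤ Nd := (abs_nonneg _).trans hJI
  have h₁ := (integrable_weight_tensor hnd hn).div_const |I|
  have h₂ := (integrable_weight_tensor hm hnd).div_const |J|
  have h₃ := (integrable_weight_tensor hm hn).mul_const (|J - I| / (|I| * |J|))
  calc ∫ p : ℝ × ℝ, (1 + |p.1|) ^ k * (1 + |p.2|) ^ k *
        |n p.1 * n p.2 / I - m p.1 * m p.2 / J| ∂(volume.prod volume)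
      ≤ ∫ p : ℝ × ℝ, (1 + |p.1|) ^ k * (1 + |p.2|) ^ k * |(n p.1 - m p.1) * n p.2| / |I| +
          (1 + |p.1|) ^ k * (1 + |p.2|) ^ k * |m p.1 * (n p.2 - m p.2)| / |J| +
          (1 + |p.1|) ^ k * (1 + |p.2|) ^ k * |m p.1 * n p.2| * (|J - I| / (|I| * |J|))
          ∂(volume.prod volume) := by
        refine integral_mono_of_nonneg (.of_forall fun p => by positivity)
          ((h₁.add h₂).add h₃) (.of_forall fun p => ?_)
        exact (mul_le_mul_of_nonneg_left (abs_mul_div_sub_mul_div_le _ _ _ _ _ _ hI hJ)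
          (by positivity)).trans_eq (by ring)
    _ = Nd * Nn / |I| + Nm * Nd / |J| + Nm * Nn * (|J - I| / (|I| * |J|)) := by
        rw [integral_add ?_ h₃, integral_add h₁ h₂, integral_div, integral_div, integral_mul_const,
          integral_weight_tensor (fun x => n x - m x) n,
          integral_weight_tensor m (fun x => n x - m x), integral_weight_tensor m n]
        exact h₁.add h₂
    _ = Nd * (Nn / |I|) + (Nm / |J|) * Nd + (Nn / |I|) * (Nm / |J|) * |J - I| := by ring
    _ ≤ 3 * (Nn / |I|) * (Nm / |J|) * Nd := by
        have ha0 := zero_le_one.trans ha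
        have h1 := le_mul_of_one_le_right (mul_nonneg hNd ha0) hb
        have h2 := le_mul_of_one_le_left (mul_nonneg (zero_le_one.trans hb) hNd) ha
        have h3 := mul_le_mul_of_nonneg_left hJI (mul_nonneg ha0 (zero_le_one.trans hb))
        linarith

end Weighted

/-- Local Lipschitz estimate for the normalized infinitesimal reproduction operator `T` on
the weighted space `X_k` with weight `w_k(x) = (1+|x|)^k`, `k > 1`:
`‖T[n] − T[ñ]‖_{X_k} ≤ C (‖n‖_{X_k}/|∫n|) (‖ñ‖_{X_k}/|∫ñ|) ‖n − ñ‖_{X_k}`,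
with `C` depending only on `k` and `Γ`. -/
theorem stmt12 (k : ℝ) (hk : 1 < k) (Γ : ℝ → ℝ)
    (hΓ : ∀ x, 0 ≤ Γ x) (hΓm : Measurable Γ)
    (hΓint : Integrable (fun x => (1 + |x|) ^ k * Γ x))
    (hΓint1 : Integrable Γ) :
    ∃ C > 0, ∀ n n₂ : ℝ → ℝ,
      Continuous n → Continuous n₂ →
      (∃ M, ∀ x, |n x| ≤ M) → (∃ M, ∀ x, |n₂ x| ≤ M) →
      Integrable (fun x => (1 + |x|) ^ k * |n x|) →
      Integrable (fun x => (1 + |x|) ^ k * |n₂ x|) →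
      (∫ x, n x) ≠ 0 → (∫ x, n₂ x) ≠ 0 →
      (∫ x, (1 + |x|) ^ k *
          |(∫ y, ∫ y', Γ (x - (y + y') / 2) * n y * n y' / (∫ z, n z))
            - (∫ y, ∫ y', Γ (x - (y + y') / 2) * n₂ y * n₂ y' / (∫ z, n₂ z))|)
        ≤ C * ((∫ x, (1 + |x|) ^ k * |n x|) / |∫ x, n x|)
            * ((∫ x, (1 + |x|) ^ k * |n₂ x|) / |∫ x, n₂ x|)
            * (∫ x, (1 + |x|) ^ k * |n x - n₂ x|) := by
  have hk0 : 0 ≤ k := by linarith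
  have hA : 0 ≤ ∫ x, (1 + |x|) ^ k * Γ x :=
    integral_nonneg fun x => mul_nonneg (by positivity) (hΓ x)
  refine ⟨3 * (∫ x, (1 + |x|) ^ k * Γ x) + 1, by positivity, ?_⟩
  rintro n n₂ hnc hnc₂ ⟨M, hM⟩ ⟨M₂, hM₂⟩ hn hn₂ hI hI₂
  have hnm := hnc.measurable
  have hnm₂ := hnc₂.measurable
  have hkernel : ∀ x, (∫ y, ∫ y', Γ (x - (y + y') / 2) * n y * n y' / (∫ z, n z)) -
      (∫ y, ∫ y', Γ (x - (y + y') / 2) * n₂ y * n₂ y' / (∫ z, n₂ z)) =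
      ∫ p : ℝ × ℝ, Γ (x - (p.1 + p.2) / 2) *
        (n p.1 * n p.2 / (∫ z, n z) - n₂ p.1 * n₂ p.2 / (∫ z, n₂ z)) ∂(volume.prod volume) := by
    intro x
    have h := (integrable_kernel_tensor hΓm hΓint1 hnm (integrable_of_integrable_weight_mul_abs
      hk0 hnm.aestronglyMeasurable hn) hnm hM x).div_const (∫ z, n z)
    have h₂ := (integrable_kernel_tensor hΓm hΓint1 hnm₂ (integrable_of_integrable_weight_mul_abs
      hk0 hnm₂.aestronglyMeasurable hn₂) hnm₂ hM₂ x).div_const (∫ z, n₂ z)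
    rw [integral_integral h, integral_integral h₂, ← integral_sub h h₂]
    congr 1 with p
    ring
  have hbound := integral_weight_mul_abs_tensor_div_sub_le hk0 hn hn₂ hnm hnm₂ hI hI₂
  have hratio : 0 ≤ (∫ x, (1 + |x|) ^ k * |n x|) / |∫ x, n x| *
      ((∫ x, (1 + |x|) ^ k * |n₂ x|) / |∫ x, n₂ x|) * ∫ x, (1 + |x|) ^ k * |n x - n₂ x| := by
    positivity
  simp only [hkernel]
  calc _ ≤ _ := integral_weight_mul_abs_integral_kernel_le hk0 hΓ hΓm hΓint (by fun_prop)
        (integrable_weight_mul_abs_tensor_div_sub hn hn₂ hnm hnm₂ _ _)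
    _ ≤ _ := mul_le_mul_of_nonneg_left hbound hA
    _ ≤ _ := by nlinarith
end

section
/- Let J : [0,∞) → ℝ solve ε²·J'(t) = κ − J(t)·b(t) where b is continuous with a₀ ≤ b(t) for all t, a₀ > 0, κ > 0, J(0) > 0. Suppose moreover |b(t) − b(s)| ≤ C_b·|t−s| for all s, t. Then for β ∈ (1,2) and all t ≥ ε^β, |J(t) − κ/b(t)| ≤ (J(0) + κ/a₀)·exp(−a₀/ε^{2−β}) + C·ε^β, where C depends only on κ, a₀, C_b. -/
/-! Variation of constants: if `P' = p`, a solution of `y' = f - p y` satisfies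
`y t = e^{-(P t - P t₀)} y t₀ + ∫_{t₀}^{t} e^{-(P t - P s)} f s ds`, and `p ≥ a > 0` bounds the
kernel by `e^{-a (t - s)}`, whose integral is at most `1 / a`. From `t₀ = 0` this traps `J`
between `0` and `J 0 + κ / a₀`. On the layer `[t - δ, t]` one applies it to `J - κ / b t`, i.e. with
the coefficient frozen at the final time: the initial discrepancy is damped by `e^{-a₀ δ / ε²}`,
and the forcing `(κ / b t) (b t - b s) / ε²` is `O(C_b δ / ε²)` by the Lipschitz bound. -/

open Real Set

theorem integral_exp_neg_mul_sub {a : ℝ} (ha : a ≠ 0) (t₀ t : ℝ) :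
    ∫ s in t₀..t, exp (-(a * (t - s))) = (1 - exp (-(a * (t - t₀)))) / a := by
  have h : ∀ s, -(a * (t - s)) = a * s - a * t := fun s => by ring
  simp only [h]
  rw [intervalIntegral.integral_comp_mul_sub (fun x => exp x) ha, integral_exp, sub_self,
    exp_zero, smul_eq_mul]
  field_simp

section LinearODE

variable {P p f y : ℝ → ℝ} {a k t₀ t : ℝ}

theorem mul_sub_le_sub_of_hasDerivAt (hP : ∀ s, HasDerivAt P (p s) s) (hpa : ∀ s, a ≤ p s)
    (h : t₀ ≤ t) : a * (t - t₀) ≤ P t - P t₀ :=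
  mul_sub_le_image_sub_of_le_deriv (fun s => (hP s).differentiableAt)
    (fun s => (hP s).deriv ▸ hpa s) h

theorem duhamel_formula (hP : ∀ s, HasDerivAt P (p s) s) (hf : Continuous f)
    (hy : ∀ s ∈ Icc t₀ t, HasDerivAt y (f s - p s * y s) s) (h : t₀ ≤ t) :
    y t = exp (-(P t - P t₀)) * y t₀ + ∫ s in t₀..t, exp (-(P t - P s)) * f s := by
  have hPc : Continuous P := continuous_iff_continuousAt.mpr fun s => (hP s).continuousAt
  have hφ : ∀ s ∈ uIcc t₀ t, HasDerivAt (fun s => exp (P s) * y s) (exp (P s) * f s) s := by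
    intro s hs
    rw [uIcc_of_le h] at hs
    exact ((hP s).exp.mul (hy s hs)).congr_deriv (by ring)
  have hFTC := intervalIntegral.integral_eq_sub_of_hasDerivAt hφ
    ((continuous_exp.comp hPc).mul hf |>.intervalIntegrable t₀ t)
  have hkernel : ∀ s, exp (-(P t - P s)) * f s = exp (-P t) * (exp (P s) * f s) := fun s => by
    rw [← mul_assoc, ← exp_add]; congr 2; ring
  rw [intervalIntegral.integral_congr fun s _ => hkernel s, intervalIntegral.integral_const_mul,
    hFTC]
  have hinv : exp (-P t) * exp (P t) = 1 := by rw [← exp_add, neg_add_cancel, exp_zero]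
  have hsplit : exp (-(P t - P t₀)) = exp (-P t) * exp (P t₀) := by rw [← exp_add]; ring_nf
  linear_combination (-y t) * hinv - y t₀ * hsplit

theorem abs_integral_exp_mul_le_div (hP : ∀ s, HasDerivAt P (p s) s) (hpa : ∀ s, a ≤ p s)
    (ha : 0 < a) (hf : Continuous f) {F : ℝ} (hF : ∀ s ∈ Icc t₀ t, |f s| ≤ F) (h : t₀ ≤ t) :
    |∫ s in t₀..t, exp (-(P t - P s)) * f s| ≤ F / a := by
  have hPc : Continuous P := continuous_iff_continuousAt.mpr fun s => (hP s).continuousAt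
  have hF₀ : 0 ≤ F := (abs_nonneg _).trans (hF t₀ ⟨le_rfl, h⟩)
  calc |∫ s in t₀..t, exp (-(P t - P s)) * f s|
      ≤ ∫ s in t₀..t, |exp (-(P t - P s)) * f s| :=
        intervalIntegral.abs_integral_le_integral_abs h
    _ ≤ ∫ s in t₀..t, F * exp (-(a * (t - s))) := by
        refine intervalIntegral.integral_mono_on h
          (Continuous.intervalIntegrable (by fun_prop) _ _)
          (Continuous.intervalIntegrable (by fun_prop) _ _) fun s hs => ?_
        rw [abs_mul, abs_exp, mul_comm]
        have hkernel := mul_sub_le_sub_of_hasDerivAt hP hpa hs.2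
        exact mul_le_mul (hF s hs) (exp_le_exp.mpr (by linarith)) (exp_pos _).le hF₀
    _ = F * ((1 - exp (-(a * (t - t₀)))) / a) := by
        rw [intervalIntegral.integral_const_mul, integral_exp_neg_mul_sub ha.ne']
    _ ≤ F / a := by
        rw [mul_div_assoc']
        exact div_le_div_of_nonneg_right
          (mul_le_of_le_one_right hF₀ (by linarith [exp_pos (-(a * (t - t₀)))])) ha.le

theorem nonneg_and_le_add_div_of_hasDerivAt (hP : ∀ s, HasDerivAt P (p s) s)
    (hpa : ∀ s, a ≤ p s) (ha : 0 < a) (hk : 0 ≤ k) (hy₀ : 0 ≤ y t₀)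
    (hy : ∀ s ∈ Icc t₀ t, HasDerivAt y (k - p s * y s) s) (h : t₀ ≤ t) :
    0 ≤ y t ∧ y t ≤ y t₀ + k / a := by
  have hduhamel := duhamel_formula (f := fun _ => k) hP continuous_const hy h
  have hI := abs_integral_exp_mul_le_div hP hpa ha continuous_const
    (fun _ _ => (abs_of_nonneg hk).le) h
  have hI₀ : 0 ≤ ∫ s in t₀..t, exp (-(P t - P s)) * k :=
    intervalIntegral.integral_nonneg h fun s _ => by positivity
  have hdecay : exp (-(P t - P t₀)) ≤ 1 :=
    exp_le_one_iff.mpr (by nlinarith [mul_sub_le_sub_of_hasDerivAt hP hpa h])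
  have hdecay₀ := exp_pos (-(P t - P t₀))
  constructor <;> nlinarith [abs_le.mp hI]

theorem abs_sub_div_le_of_hasDerivAt (hp : Continuous p) (hP : ∀ s, HasDerivAt P (p s) s)
    (hpa : ∀ s, a ≤ p s) (ha : 0 < a) {M : ℝ} (hM : ∀ s ∈ Icc t₀ t, |p t - p s| ≤ M)
    (hy : ∀ s ∈ Icc t₀ t, HasDerivAt y (k - p s * y s) s) (h : t₀ ≤ t) :
    |y t - k / p t| ≤ exp (-(a * (t - t₀))) * |y t₀ - k / p t| + |k| * M / a ^ 2 := by
  set c := k / p t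
  have hpt : 0 < p t := ha.trans_le (hpa t)
  have hc : c * p t = k := div_mul_cancel₀ k hpt.ne'
  have hz : ∀ s ∈ Icc t₀ t, HasDerivAt (fun s => y s - c) (c * (p t - p s) - p s * (y s - c)) s :=
    fun s hs => ((hy s hs).sub_const c).congr_deriv (by linear_combination -hc)
  have hduhamel := duhamel_formula hP (by fun_prop) hz h
  have hI := abs_integral_exp_mul_le_div hP hpa ha (f := fun s => c * (p t - p s))
    (by fun_prop) (F := |k| / a * M) (fun s hs => by
      rw [abs_mul, abs_div, abs_of_pos hpt]
      exact mul_le_mul (div_le_div_of_nonneg_left (abs_nonneg k) ha (hpa t)) (hM s hs)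
        (abs_nonneg _) (by positivity)) h
  have hdecay : exp (-(P t - P t₀)) ≤ exp (-(a * (t - t₀))) :=
    exp_le_exp.mpr (neg_le_neg (mul_sub_le_sub_of_hasDerivAt hP hpa h))
  calc |y t - c| ≤ exp (-(P t - P t₀)) * |y t₀ - c| + |k| / a * M / a := by
        rw [hduhamel]
        refine (abs_add_le _ _).trans (add_le_add ?_ hI)
        rw [abs_mul, abs_exp]
    _ ≤ exp (-(a * (t - t₀))) * |y t₀ - c| + |k| / a * M / a := by gcongr
    _ = exp (-(a * (t - t₀))) * |y t₀ - c| + |k| * M / a ^ 2 := by ring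

end LinearODE

theorem abs_sub_div_le_of_relaxation {κ a₀ Cb ε δ : ℝ} {J b : ℝ → ℝ} (hκ : 0 < κ) (ha : 0 < a₀)
    (hCb : 0 ≤ Cb) (hε : 0 < ε) (hbc : Continuous b) (hba : ∀ t, a₀ ≤ b t)
    (hbl : ∀ s t, |b t - b s| ≤ Cb * |t - s|) (hJ0 : 0 < J 0)
    (hJ : ∀ t, 0 ≤ t → HasDerivAt J ((κ - J t * b t) / ε ^ 2) t) (hδ : 0 ≤ δ) {t : ℝ} (ht : δ ≤ t) :
    |J t - κ / b t| ≤ (J 0 + κ / a₀) * exp (-(a₀ * δ / ε ^ 2)) + κ * Cb / a₀ ^ 2 * δ := by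
  have hε2 : 0 < ε ^ 2 := by positivity
  have hP : ∀ s, HasDerivAt (fun s => (∫ x in (0 : ℝ)..s, b x) / ε ^ 2) (b s / ε ^ 2) s :=
    fun s => (hbc.integral_hasStrictDerivAt 0 s).hasDerivAt.div_const _
  have hpa : ∀ s, a₀ / ε ^ 2 ≤ b s / ε ^ 2 := fun s => by gcongr; exact hba s
  have hJ' : ∀ s, 0 ≤ s → HasDerivAt J (κ / ε ^ 2 - b s / ε ^ 2 * J s) s :=
    fun s hs => (hJ s hs).congr_deriv (by ring)
  have hlip : ∀ s ∈ Icc (t - δ) t, |b t / ε ^ 2 - b s / ε ^ 2| ≤ Cb * δ / ε ^ 2 := by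
    intro s hs
    rw [← sub_div, abs_div, abs_of_pos hε2]
    gcongr
    exact (hbl s t).trans (by gcongr; rw [abs_of_nonneg (by linarith [hs.2])]; linarith [hs.1])
  obtain ⟨hJ₀, hJ₁⟩ := nonneg_and_le_add_div_of_hasDerivAt hP hpa (by positivity) (by positivity)
    hJ0.le (fun s hs => hJ' s hs.1) (sub_nonneg.mpr ht)
  have hquasi := abs_sub_div_le_of_hasDerivAt (hbc.div_const _) hP hpa (by positivity) hlip
    (fun s hs => hJ' s (by linarith [hs.1])) (sub_le_self t hδ)
  rw [show κ / ε ^ 2 / (a₀ / ε ^ 2) = κ / a₀ by field_simp] at hJ₁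
  rw [show κ / ε ^ 2 / (b t / ε ^ 2) = κ / b t by field_simp,
    show a₀ / ε ^ 2 * (t - (t - δ)) = a₀ * δ / ε ^ 2 by ring,
    show |κ / ε ^ 2| * (Cb * δ / ε ^ 2) / (a₀ / ε ^ 2) ^ 2 = κ * Cb / a₀ ^ 2 * δ by
      rw [abs_of_pos (by positivity)]; field_simp] at hquasi
  have hinit : |J (t - δ) - κ / b t| ≤ J 0 + κ / a₀ := by
    have : κ / b t ≤ κ / a₀ := div_le_div_of_nonneg_left hκ.le ha (hba t)
    rw [abs_le]; constructor <;> linarith [div_pos hκ (ha.trans_le (hba t))]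
  calc |J t - κ / b t| ≤ _ := hquasi
    _ ≤ _ := by rw [mul_comm (J 0 + _)]; gcongr

/-- Quasi-static relaxation: if `ε² J' = κ − J b(t)` with `b` Lipschitz and `b ≥ a₀ > 0`,
`J(0) > 0`, then for `β ∈ (1,2)` and `t ≥ ε^β`,
`|J(t) − κ/b(t)| ≤ (J(0) + κ/a₀) exp(−a₀/ε^{2−β}) + C ε^β` with `C = C(κ, a₀, C_b)`. -/
theorem stmt16 (κ a₀ Cb : ℝ) (hκ : 0 < κ) (ha : 0 < a₀) (hCb : 0 ≤ Cb) :
    ∃ C > 0, ∀ (ε β : ℝ) (J b : ℝ → ℝ),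
      0 < ε → ε ≤ 1 → 1 < β → β < 2 →
      Continuous b → (∀ t : ℝ, a₀ ≤ b t) →
      (∀ s t : ℝ, |b t - b s| ≤ Cb * |t - s|) →
      0 < J 0 →
      (∀ t : ℝ, 0 ≤ t → HasDerivAt J ((κ - J t * b t) / ε ^ 2) t) →
      ∀ t : ℝ, ε ^ β ≤ t →
        |J t - κ / b t| ≤ (J 0 + κ / a₀) * Real.exp (-a₀ / ε ^ (2 - β)) + C * ε ^ β := by
  refine ⟨κ * Cb / a₀ ^ 2 + 1, by positivity, ?_⟩
  intro ε β J b hε _ _ _ hbc hba hbl hJ0 hJ t ht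
  have hlayer : -(a₀ * ε ^ β / ε ^ 2) = -a₀ / ε ^ (2 - β) := by
    rw [rpow_sub hε, rpow_two]; field_simp
  have hδ : 0 < ε ^ β := rpow_pos_of_pos hε β
  calc |J t - κ / b t|
      ≤ (J 0 + κ / a₀) * exp (-(a₀ * ε ^ β / ε ^ 2)) + κ * Cb / a₀ ^ 2 * ε ^ β :=
        abs_sub_div_le_of_relaxation hκ ha hCb hε hbc hba hbl hJ0 hJ hδ.le ht
    _ ≤ _ := by rw [hlayer]; gcongr; linarith
end

section
/- Let q be a probability density on ℝ with mean M₁ and finite second moment, and let m : ℝ → ℝ be C² with |m''(x)| ≤ A·(1+|x|^p). Then |∫ m(y)·q(y) dy − m(M₁)| ≤ C·A·((1 + |M₁|^p)·M₂ᶜ + M_{2+p}^{|c|}), where M₂ᶜ = ∫(y−M₁)²q(y)dy, M_{2+p}^{|c|} = ∫|y−M₁|^{2+p}q(y)dy, and C depends only on p. -/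
/-!
Expand `m` to first order around the mean: `m y = m M₁ + m'(M₁) (y - M₁) + R y`. Against the
density `q` the constant term integrates to `m M₁` and the linear term to `0`, so only the remainder
is left. By the mean value theorem, applied twice, `|R y|` is at most `(y - M₁)²` times the largest
value of `|m''|` between `M₁` and `y`, and the growth bound on `m''` together with
`|x| ≤ |M₁| + |y - M₁|` makes that at most `2^p A ((1 + |M₁|^p) (y - M₁)² + |y - M₁|^(2+p))`.
-/

open MeasureTheory Set

theorem abs_sub_sub_deriv_mul_le {f : ℝ → ℝ} (hf : Differentiable ℝ f)
    (hf' : Differentiable ℝ (deriv f)) {a b K : ℝ}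
    (hK : ∀ x ∈ uIcc a b, |deriv (deriv f) x| ≤ K) :
    |f b - f a - deriv f a * (b - a)| ≤ K * (b - a) ^ 2 := by
  have hK₀ : 0 ≤ K := (abs_nonneg _).trans (hK a left_mem_uIcc)
  have hderiv : ∀ x ∈ uIcc a b, ‖deriv f x - deriv f a‖ ≤ K * |b - a| := fun x hx =>
    calc ‖deriv f x - deriv f a‖ ≤ K * ‖x - a‖ :=
          (convex_uIcc a b).norm_image_sub_le_of_norm_deriv_le (fun z _ => hf' z) hK
            left_mem_uIcc hx
      _ ≤ K * |b - a| := mul_le_mul_of_nonneg_left (abs_sub_left_of_mem_uIcc hx) hK₀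
  have hg : ∀ x, HasDerivAt (fun x => f x - deriv f a * x) (deriv f x - deriv f a) x := fun x =>
    ((hf x).hasDerivAt.sub ((hasDerivAt_id' x).const_mul (deriv f a))).congr_deriv (by ring)
  have hmvt := (convex_uIcc a b).norm_image_sub_le_of_norm_hasDerivWithin_le
    (fun x _ => (hg x).hasDerivWithinAt) hderiv left_mem_uIcc right_mem_uIcc
  calc |f b - f a - deriv f a * (b - a)| = ‖f b - deriv f a * b - (f a - deriv f a * a)‖ := by
        rw [Real.norm_eq_abs]; ring_nf
    _ ≤ K * |b - a| * ‖b - a‖ := hmvt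
    _ = K * (b - a) ^ 2 := by rw [Real.norm_eq_abs, mul_assoc, ← sq, sq_abs]

theorem one_add_abs_pow_le_of_mem_uIcc (p : ℕ) {a b x : ℝ} (hx : x ∈ uIcc a b) :
    1 + |x| ^ p ≤ 2 ^ p * (1 + |a| ^ p + |b - a| ^ p) := by
  have hx' : |x| ≤ |a| + |b - a| :=
    calc |x| = |a + (x - a)| := by rw [add_sub_cancel]
      _ ≤ |a| + |x - a| := abs_add_le _ _
      _ ≤ |a| + |b - a| := add_le_add_right (abs_sub_left_of_mem_uIcc hx) _
  have h2 : (2 : ℝ) ^ (p - 1) ≤ 2 ^ p := pow_le_pow_right₀ one_le_two (Nat.sub_le p 1)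
  have h1 : (1 : ℝ) ≤ 2 ^ p := one_le_pow₀ one_le_two
  have hsum : (0 : ℝ) ≤ |a| ^ p + |b - a| ^ p := by positivity
  calc 1 + |x| ^ p ≤ 1 + (|a| + |b - a|) ^ p := by gcongr
    _ ≤ 1 + 2 ^ (p - 1) * (|a| ^ p + |b - a| ^ p) := by
        gcongr; exact add_pow_le (abs_nonneg _) (abs_nonneg _) p
    _ ≤ 2 ^ p * (1 + |a| ^ p + |b - a| ^ p) := by nlinarith

theorem abs_taylor_remainder_le_of_abs_deriv_deriv_le (p : ℕ) {m : ℝ → ℝ} {A : ℝ} (hA : 0 ≤ A)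
    (hm : ContDiff ℝ 2 m) (hbound : ∀ x, |deriv (deriv m) x| ≤ A * (1 + |x| ^ p)) (a y : ℝ) :
    |m y - m a - deriv m a * (y - a)|
      ≤ 2 ^ p * A * ((1 + |a| ^ p) * (y - a) ^ 2 + |y - a| ^ (2 + p)) := by
  have hm' : ContDiff ℝ 1 (deriv m) := ((contDiff_succ_iff_deriv (n := 1)).mp hm).2.2
  have hK : ∀ x ∈ uIcc a y, |deriv (deriv m) x| ≤ 2 ^ p * A * (1 + |a| ^ p + |y - a| ^ p) :=
    fun x hx => calc
      |deriv (deriv m) x| ≤ A * (1 + |x| ^ p) := hbound x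
      _ ≤ A * (2 ^ p * (1 + |a| ^ p + |y - a| ^ p)) :=
          mul_le_mul_of_nonneg_left (one_add_abs_pow_le_of_mem_uIcc p hx) hA
      _ = 2 ^ p * A * (1 + |a| ^ p + |y - a| ^ p) := by ring
  calc |m y - m a - deriv m a * (y - a)|
      ≤ 2 ^ p * A * (1 + |a| ^ p + |y - a| ^ p) * (y - a) ^ 2 :=
        abs_sub_sub_deriv_mul_le (hm.differentiable two_ne_zero) (hm'.differentiable one_ne_zero) hK
    _ = 2 ^ p * A * ((1 + |a| ^ p) * (y - a) ^ 2 + |y - a| ^ (2 + p)) := by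
        rw [pow_add, ← sq_abs (y - a)]; ring

section Density

variable {μ : Measure ℝ} {q : ℝ → ℝ} {M : ℝ}

theorem integral_sub_mul_eq_zero_of_mean (hq : Integrable q μ) (hq₁ : ∫ x, q x ∂μ = 1)
    (hxq : Integrable (fun x => x * q x) μ) (hM : M = ∫ x, x * q x ∂μ) :
    ∫ y, (y - M) * q y ∂μ = 0 := by
  simp_rw [sub_mul]
  rw [integral_sub hxq (hq.const_mul _), integral_const_mul, hq₁, mul_one, hM, sub_self]

theorem integral_mul_sub_eq_integral_taylor_remainder_mul (hq : Integrable q μ)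
    (hq₁ : ∫ x, q x ∂μ = 1) (hxq : Integrable (fun x => x * q x) μ) (hM : M = ∫ x, x * q x ∂μ)
    {m : ℝ → ℝ} (hmq : Integrable (fun y => m y * q y) μ) (c d : ℝ) :
    (∫ y, m y * q y ∂μ) - c = ∫ y, (m y - c - d * (y - M)) * q y ∂μ := by
  have hlin : Integrable (fun y => (y - M) * q y) μ := by
    simp_rw [sub_mul]; exact hxq.sub (hq.const_mul _)
  have hexpand : (fun y => (m y - c - d * (y - M)) * q y)
      = fun y => (m y * q y - c * q y) - d * ((y - M) * q y) := by
    ext y; ring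
  have hmc : Integrable (fun y => m y * q y - c * q y) μ := hmq.sub (hq.const_mul c)
  rw [hexpand, integral_sub hmc (hlin.const_mul d), integral_sub hmq (hq.const_mul c),
    integral_const_mul, integral_const_mul, hq₁, integral_sub_mul_eq_zero_of_mean hq hq₁ hxq hM]
  ring

end Density

/-- Taylor estimate for the mean mortality: for a probability density `q` with mean `M₁`
and `m ∈ C²` with `|m''| ≤ A (1 + |x|^p)`,
`|∫ m q − m(M₁)| ≤ C A ((1+|M₁|^p) M₂ᶜ + M_{2+p}^{|c|})` with `C = C(p)`. -/
theorem stmt17 (p : ℕ) :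
    ∃ C > 0, ∀ (q m : ℝ → ℝ) (A M₁ : ℝ), 0 < A →
      (∀ x, 0 ≤ q x) → Measurable q → (∫ x, q x) = 1 →
      Integrable (fun x => x * q x) → M₁ = ∫ x, x * q x →
      ContDiff ℝ 2 m →
      (∀ x : ℝ, |deriv (deriv m) x| ≤ A * (1 + |x| ^ p)) →
      Integrable (fun y => m y * q y) →
      Integrable (fun y => (y - M₁) ^ 2 * q y) →
      Integrable (fun y => |y - M₁| ^ (2 + p) * q y) →
      |(∫ y, m y * q y) - m M₁|
        ≤ C * A * ((1 + |M₁| ^ p) * (∫ y, (y - M₁) ^ 2 * q y)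
            + ∫ y, |y - M₁| ^ (2 + p) * q y) := by
  refine ⟨2 ^ p, by positivity, ?_⟩
  intro q m A M₁ hA hq₀ _ hq₁ hxq hM hm hbound hmq h2q hpq
  have hq : Integrable q := .of_integral_ne_zero (by rw [hq₁]; exact one_ne_zero)
  have hremainder : ∀ y, ‖(m y - m M₁ - deriv m M₁ * (y - M₁)) * q y‖
      ≤ 2 ^ p * A * ((1 + |M₁| ^ p) * ((y - M₁) ^ 2 * q y) + |y - M₁| ^ (2 + p) * q y) := by
    intro y
    rw [Real.norm_eq_abs, abs_mul, abs_of_nonneg (hq₀ y), ← mul_assoc, ← add_mul, ← mul_assoc]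
    exact mul_le_mul_of_nonneg_right
      (abs_taylor_remainder_le_of_abs_deriv_deriv_le p hA.le hm hbound M₁ y) (hq₀ y)
  calc |(∫ y, m y * q y) - m M₁|
      = ‖∫ y, (m y - m M₁ - deriv m M₁ * (y - M₁)) * q y‖ := by
        rw [integral_mul_sub_eq_integral_taylor_remainder_mul hq hq₁ hxq hM hmq, Real.norm_eq_abs]
    _ ≤ ∫ y, 2 ^ p * A * ((1 + |M₁| ^ p) * ((y - M₁) ^ 2 * q y) + |y - M₁| ^ (2 + p) * q y) :=
        norm_integral_le_of_norm_le (((h2q.const_mul _).add hpq).const_mul _)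
          (.of_forall hremainder)
    _ = _ := by rw [integral_const_mul, integral_add (h2q.const_mul _) hpq, integral_const_mul]
end
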